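/- arXiv:2103.09199 — 6 statements merged into one kernel-verified Lean document; each statement's English description precedes it below -/
import Mathlib

section
/- Let k and r be integers with 1 ≤ r ≤ k, and let x_0, x_1, ..., x_{k+r} be real numbers. For 0 ≤ i ≤ r define m_i := max{x_i, x_{i+1}, ..., x_{i+k}}. Then there exists an index i* with 0 ≤ i* ≤ r such that m_0 ≥ m_1 ≥ ... ≥ m_{i*} and m_{i*} ≤ m_{i*+1} ≤ ... ≤ m_r (i.e., the sequence m_0,...,m_r is first nonincreasing and then nondecreasing). -/
open Finset

theorem sliding_window_max_unimodal (k r : ℕ) (hr : 1 ≤ r) (hrk : r ≤ k)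
    (x : ℕ → ℝ) (m : ℕ → ℝ)
    (hm : ∀ i, m i = (Finset.Icc i (i + k)).sup'
      (Finset.nonempty_Icc.mpr (Nat.le_add_right i k)) x) :
    ∃ istar ≤ r,
      (∀ i j, i ≤ j → j ≤ istar → m j ≤ m i) ∧
      (∀ i j, istar ≤ i → i ≤ j → j ≤ r → m i ≤ m j) := by
  have key : ∀ a b c : ℕ, a ≤ b → b ≤ c → c ≤ k → m b ≤ max (m a) (m c) := by
    intro a b c hab hbc hck
    rw [hm a, hm b, hm c]
    apply Finset.sup'_le
    intro t ht
    rw [Finset.mem_Icc] at ht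
    by_cases h : t ≤ a + k
    · exact le_max_of_le_left (Finset.le_sup' x (Finset.mem_Icc.mpr ⟨by omega, h⟩))
    · exact le_max_of_le_right (Finset.le_sup' x (Finset.mem_Icc.mpr ⟨by omega, by omega⟩))
  obtain ⟨istar, histar, hmin⟩ :=
    Finset.exists_min_image (Finset.Icc 0 r) m ⟨0, by simp⟩
  rw [Finset.mem_Icc] at histar
  refine ⟨istar, histar.2, ?_, ?_⟩
  · intro i j hij hji
    have h1 : m j ≤ max (m i) (m istar) := key i j istar hij hji (by omega)
    have h2 : m istar ≤ m i := hmin i (Finset.mem_Icc.mpr ⟨Nat.zero_le _, by omega⟩)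
    calc m j ≤ max (m i) (m istar) := h1
      _ ≤ m i := max_le le_rfl h2
  · intro i j hi hij hjr
    have h1 : m i ≤ max (m istar) (m j) := key istar i j hi hij (by omega)
    have h2 : m istar ≤ m j := hmin j (Finset.mem_Icc.mpr ⟨Nat.zero_le _, hjr⟩)
    calc m i ≤ max (m istar) (m j) := h1
      _ ≤ m j := max_le h2 le_rfl
end

section
/- Let k and r be integers with 1 ≤ r ≤ k, let x_0,...,x_{k+r} be real numbers, and for 0 ≤ i ≤ r let m_i := max{x_i,...,x_{i+k}}. Then the total variation of the sequence of window maxima satisfies: sum over i from 0 to r−1 of |m_i − m_{i+1}| ≤ 2 · max over 0 ≤ i, j ≤ k+r of |x_i − x_j|. -/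
open Finset

theorem sliding_window_max_total_variation (k r : ℕ) (hr : 1 ≤ r) (hrk : r ≤ k)
    (x : ℕ → ℝ) (m : ℕ → ℝ)
    (hm : ∀ i, m i = (Finset.Icc i (i + k)).sup'
      (Finset.nonempty_Icc.mpr (Nat.le_add_right i k)) x) :
    ∑ i ∈ Finset.range r, |m i - m (i + 1)| ≤
      2 * ((Finset.Icc 0 (k + r) ×ˢ Finset.Icc 0 (k + r)).sup'
        (Finset.Nonempty.product (Finset.nonempty_Icc.mpr (Nat.zero_le _))
          (Finset.nonempty_Icc.mpr (Nat.zero_le _)))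
        (fun p => |x p.1 - x p.2|)) := by
  set D := ((Finset.Icc 0 (k + r) ×ˢ Finset.Icc 0 (k + r)).sup'
        (Finset.Nonempty.product (Finset.nonempty_Icc.mpr (Nat.zero_le _))
          (Finset.nonempty_Icc.mpr (Nat.zero_le _)))
        (fun p => |x p.1 - x p.2|)) with hD
  set P : ℕ → ℝ := fun i => (insert k (Finset.Icc i k)).sup' (Finset.insert_nonempty _ _) x with hP
  set Q : ℕ → ℝ := fun i => (Finset.Icc k (i + k)).sup'
      (Finset.nonempty_Icc.mpr (Nat.le_add_left k i)) x with hQ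
  -- m i = max (P i) (Q i) for i ≤ k
  have hmax : ∀ i, i ≤ k → m i = max (P i) (Q i) := by
    intro i hik
    have hset : Finset.Icc i (i + k) = insert k (Finset.Icc i k) ∪ Finset.Icc k (i + k) := by
      ext j
      simp only [Finset.mem_Icc, Finset.mem_union, Finset.mem_insert]
      omega
    rw [hm i]
    rw [Finset.sup'_congr _ hset (fun _ _ => rfl)]
    exact Finset.sup'_union _ _ _
  have hPanti : ∀ i, P (i + 1) ≤ P i := by
    intro i
    apply Finset.sup'_mono
    intro j hj
    simp only [Finset.mem_insert, Finset.mem_Icc] at hj ⊢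
    omega
  have hQmono : ∀ i, Q i ≤ Q (i + 1) := by
    intro i
    apply Finset.sup'_mono
    intro j hj
    simp only [Finset.mem_Icc] at hj ⊢
    omega
  have key : ∀ i ∈ Finset.range r,
      |m i - m (i + 1)| ≤ (P i - P (i + 1)) + (Q (i + 1) - Q i) := by
    intro i hi
    simp only [Finset.mem_range] at hi
    rw [hmax i (by omega), hmax (i + 1) (by omega)]
    calc |max (P i) (Q i) - max (P (i+1)) (Q (i+1))|
        ≤ max |P i - P (i+1)| |Q i - Q (i+1)| := abs_max_sub_max_le_max _ _ _ _
      _ ≤ (P i - P (i + 1)) + (Q (i + 1) - Q i) := by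
          rw [abs_of_nonneg (by linarith [hPanti i]), abs_of_nonpos (by linarith [hQmono i])]
          have h1 : 0 ≤ P i - P (i+1) := by linarith [hPanti i]
          have h2 : 0 ≤ Q (i+1) - Q i := by linarith [hQmono i]
          apply max_le <;> linarith
  calc ∑ i ∈ Finset.range r, |m i - m (i + 1)|
      ≤ ∑ i ∈ Finset.range r, ((P i - P (i + 1)) + (Q (i + 1) - Q i)) :=
        Finset.sum_le_sum key
    _ = (P 0 - P r) + (Q r - Q 0) := by
        rw [Finset.sum_add_distrib, Finset.sum_range_sub' P, Finset.sum_range_sub Q]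
    _ ≤ 2 * D := by
        obtain ⟨a, ha, hPa⟩ := Finset.exists_mem_eq_sup' (Finset.insert_nonempty k (Finset.Icc 0 k)) x
        obtain ⟨b, hb, hQb⟩ := Finset.exists_mem_eq_sup'
          (Finset.nonempty_Icc.mpr (Nat.le_add_left k r)) x
        have hak : a ≤ k + r := by
          simp only [Finset.mem_insert, Finset.mem_Icc] at ha; omega
        have hbk : b ≤ k + r := by
          simp only [Finset.mem_Icc] at hb; omega
        have hPr : x k ≤ P r := Finset.le_sup' x (Finset.mem_insert_self _ _)
        have hQ0 : x k ≤ Q 0 := Finset.le_sup' x (by simp [Finset.mem_Icc])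
        have hDa : |x a - x k| ≤ D :=
          Finset.le_sup' (f := fun p => |x p.1 - x p.2|)
            (b := (a, k)) (by simp [Finset.mem_product, Finset.mem_Icc]; omega)
        have hDb : |x b - x k| ≤ D :=
          Finset.le_sup' (f := fun p => |x p.1 - x p.2|)
            (b := (b, k)) (by simp [Finset.mem_product, Finset.mem_Icc]; omega)
        have hP0 : P 0 = x a := hPa
        have hQr : Q r = x b := hQb
        have h1 : x a - x k ≤ |x a - x k| := le_abs_self _
        have h2 : x b - x k ≤ |x b - x k| := le_abs_self _
        linarith
end

section
/- Let x_1, ..., x_n be real numbers (n ≥ 1). Then max_{1≤i≤n} x_i − (1/n)·∑_{i=1}^n x_i ≥ (2/n³)·∑_{1≤i<j≤n} |x_i − x_j|. -/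
/-!
Writing `M` for the maximum, every `|x i - x j|` is at most one of `M - x i`, `M - x j`, hence at
most `∑ k, (M - x k) = n * (M - average)`; there are `n.choose 2 ≤ n ^ 2 / 2` pairs.
-/

open Finset

lemma abs_sub_le_sum_sub_of_forall_le {ι R : Type*} [Fintype ι] [AddCommGroup R] [LinearOrder R]
    [IsOrderedAddMonoid R] {x : ι → R} {M : R} (hM : ∀ k, x k ≤ M) (i j : ι) :
    |x i - x j| ≤ ∑ k, (M - x k) := by
  have hle : ∀ l, M - x l ≤ ∑ k, (M - x k) := fun l =>
    single_le_sum (fun k _ => sub_nonneg.2 (hM k)) (mem_univ l)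
  rw [abs_sub_le_iff]
  exact ⟨(sub_le_sub_right (hM i) _).trans (hle j), (sub_le_sub_right (hM j) _).trans (hle i)⟩

lemma sum_filter_fst_lt_snd_le {α K : Type*} [Fintype α] [LinearOrder α] [Field K] [LinearOrder K]
    [IsStrictOrderedRing K] {f : α × α → K} {C : K}
    (hC : 0 ≤ C) (hf : ∀ p, f p ≤ C) :
    ∑ p ∈ univ.filter (fun p : α × α => p.1 < p.2), f p ≤ (Fintype.card α : K) ^ 2 / 2 * C := by
  calc ∑ p ∈ univ.filter (fun p : α × α => p.1 < p.2), f p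
      ≤ ((Fintype.card α).choose 2 : K) * C := by
        rw [← Fintype.card_product_filter_lt, ← nsmul_eq_mul]
        exact sum_le_card_nsmul _ _ _ fun p _ => hf p
    _ ≤ (Fintype.card α : K) ^ 2 / 2 * C := by
        gcongr
        simpa using Nat.choose_le_pow_div (α := K) 2 (Fintype.card α)

theorem max_minus_average_ge_pairwise (n : ℕ) (hn : 1 ≤ n) (x : Fin n → ℝ) :
    Finset.univ.sup' (Finset.univ_nonempty_iff.mpr ⟨⟨0, hn⟩⟩) x
        - (1 / (n : ℝ)) * ∑ i, x i ≥
      (2 / (n : ℝ) ^ 3) *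
        ∑ p ∈ Finset.univ.filter (fun p : Fin n × Fin n => p.1 < p.2),
          |x p.1 - x p.2| := by
  set M := univ.sup' (univ_nonempty_iff.mpr ⟨⟨0, hn⟩⟩) x
  have hM : ∀ k, x k ≤ M := fun k => le_sup' x (mem_univ k)
  have hS : ∑ k, (M - x k) = n * M - ∑ i, x i := by simp [sum_sub_distrib]
  have hpairs := sum_filter_fst_lt_snd_le (f := fun p : Fin n × Fin n => |x p.1 - x p.2|)
    (sum_nonneg fun k _ => sub_nonneg.2 (hM k)) (fun p => abs_sub_le_sum_sub_of_forall_le hM p.1 p.2)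
  rw [Fintype.card_fin, hS] at hpairs
  calc (2 / (n : ℝ) ^ 3) * ∑ p ∈ univ.filter (fun p : Fin n × Fin n => p.1 < p.2), |x p.1 - x p.2|
      ≤ (2 / (n : ℝ) ^ 3) * ((n : ℝ) ^ 2 / 2 * (n * M - ∑ i, x i)) := by gcongr
    _ = M - (1 / (n : ℝ)) * ∑ i, x i := by field_simp
end

section
/- For every real number x, cosh x ≥ exp(min{|x|, x²}/4). -/
theorem cosh_ge_exp_min (x : ℝ) :
    Real.cosh x ≥ Real.exp (min |x| (x ^ 2) / 4) := by
  rcases le_total |x| 1 with h | h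
  · -- small case: min = x^2
    have hx2 : x ^ 2 ≤ |x| := by nlinarith [sq_abs x, abs_nonneg x]
    rw [min_eq_right hx2]
    have hc : Real.cosh x = 1 + 2 * Real.sinh (x / 2) ^ 2 := by
      have h2 : Real.cosh (2 * (x / 2)) =
          Real.cosh (x / 2) ^ 2 + Real.sinh (x / 2) ^ 2 := Real.cosh_two_mul _
      have h3 := Real.cosh_sq (x / 2)
      rw [show 2 * (x / 2) = x by ring] at h2
      linarith
    have hs : Real.sinh (x / 2) ^ 2 ≥ (x / 2) ^ 2 := by
      rcases le_total 0 x with hx | hx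
      · have h1 : x / 2 ≤ Real.sinh (x / 2) := Real.self_le_sinh_iff.mpr (by linarith)
        nlinarith
      · have h1 : Real.sinh (x / 2) ≤ x / 2 := Real.sinh_le_self_iff.mpr (by linarith)
        nlinarith
    set t : ℝ := x ^ 2 / 4 with ht
    have ht0 : 0 ≤ t := by positivity
    have ht1 : t ≤ 1 / 4 := by
      have := sq_abs x
      nlinarith [abs_nonneg x]
    have hexp : Real.exp t ≤ 1 + 2 * t := by
      have h1 : (-t) + 1 ≤ Real.exp (-t) := Real.add_one_le_exp _
      have h2 : Real.exp t * Real.exp (-t) = 1 := by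
        rw [← Real.exp_add]; simp
      have h3 : Real.exp t * (1 - t) ≤ 1 := by
        calc Real.exp t * (1 - t) ≤ Real.exp t * Real.exp (-t) := by
              apply mul_le_mul_of_nonneg_left (by linarith) (Real.exp_pos t).le
          _ = 1 := h2
      nlinarith [Real.exp_pos t]
    have : (1 : ℝ) + 2 * t ≤ Real.cosh x := by
      rw [hc]; nlinarith
    linarith
  · -- large case: min = |x|
    have hx2 : |x| ≤ x ^ 2 := by nlinarith [sq_abs x, abs_nonneg x]
    rw [min_eq_left hx2]
    have hcosh : Real.exp |x| / 2 ≤ Real.cosh x := by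
      rcases abs_cases x with ⟨he, _⟩ | ⟨he, _⟩
      · rw [he, Real.cosh_eq]; nlinarith [Real.exp_pos (-x)]
      · rw [he, Real.cosh_eq]; nlinarith [Real.exp_pos x]
    have key : Real.exp (|x| / 4) ≤ Real.exp |x| / 2 := by
      rw [le_div_iff₀ (by norm_num : (0:ℝ) < 2)]
      have h2 : Real.exp (|x| / 4) * 2 ≤ Real.exp |x| := by
        have : Real.exp |x| = Real.exp (|x| / 4) * Real.exp (3 * |x| / 4) := by
          rw [← Real.exp_add]; ring_nf
        rw [this]
        have h34 : (2 : ℝ) ≤ Real.exp (3 * |x| / 4) := by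
          have : Real.exp (3 / 4) ≤ Real.exp (3 * |x| / 4) :=
            Real.exp_le_exp.mpr (by linarith)
          have he1 : (2.7182818283 : ℝ) < Real.exp 1 := Real.exp_one_gt_d9
          have h4 : Real.exp (3 / 4) ^ 4 = Real.exp 3 := by
            rw [← Real.exp_nat_mul]; norm_num
          have h3 : Real.exp 3 = Real.exp 1 ^ 3 := by
            rw [← Real.exp_nat_mul]; norm_num
          have ha : (2:ℝ) ^ 4 ≤ Real.exp (3 / 4) ^ 4 := by
            rw [h4, h3]
            have h27 : (2.7:ℝ) ≤ Real.exp 1 := by linarith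
            have := pow_le_pow_left₀ (by norm_num : (0:ℝ) ≤ 2.7) h27 3
            norm_num at this ⊢
            linarith
          have := le_of_pow_le_pow_left₀ (by norm_num) (Real.exp_pos (3/4)).le ha
          linarith
        nlinarith [Real.exp_pos (|x| / 4)]
      exact h2
    linarith
end

section
/- Let x_1, ..., x_n be real numbers (n ≥ 1). Then log((1/n)·∑_{i=1}^n e^{x_i}) − (1/n)·∑_{i=1}^n x_i ≥ (1/(4n³)) · min{ ∑_{1≤i<j≤n} |x_i − x_j|, ∑_{1≤i<j≤n} (x_i − x_j)² }. -/
/-!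
Centre the data: with `y = x - x̄` (so `∑ yᵢ = 0`) the left side is `log (1 + G / n)`, where
`G = ∑ (exp yᵢ - 1 - yᵢ) ≥ 0`. Each of the pair sums `S₁ = ∑ᵢ<ⱼ |yᵢ - yⱼ|` and
`S₂ = ∑ᵢ<ⱼ (yᵢ - yⱼ)²` is at most `n - 1` times a one-index sum:
`S₁ ≤ (n - 1) ∑ |yᵢ| = 2 (n - 1) P` with `P = ∑ yᵢ⁺`, and `S₂ ≤ 2 (n - 1) ∑ yᵢ²`.
If every `|yᵢ| ≤ 2`, then `G ≥ ∑ yᵢ² / 4` and the bound through `S₂` works. Otherwise `G ≥ 1`,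
which is enough while `P ≤ 2n`; for `P ≥ 2n`, Jensen's inequality on the positive parts gives
`G ≥ n (exp p - 1 - p)` with `p = P / n`, hence `log (1 + G / n) ≥ log (exp p - p) ≥ p / 2`.
-/

open Finset Real

section SumPairs

variable {ι : Type*} [Fintype ι] [LinearOrder ι]

def sumPairs (F : ι → ι → ℝ) : ℝ :=
  ∑ p ∈ univ.filter (fun p : ι × ι => p.1 < p.2), F p.1 p.2

lemma sumPairs_eq_sum_sum_ite (F : ι → ι → ℝ) :
    sumPairs F = ∑ i, ∑ j, if i < j then F i j else 0 := by
  rw [sumPairs, sum_filter, Fintype.sum_prod_type]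

lemma two_mul_sumPairs {F : ι → ι → ℝ} (hF : ∀ i j, F i j = F j i) :
    2 * sumPairs F = ∑ i, ∑ j, F i j - ∑ i, F i i := by
  have hswap : ∑ i, ∑ j, (if j < i then F i j else 0) = sumPairs F := by
    rw [sumPairs_eq_sum_sum_ite, sum_comm]
    simp only [hF]
  have hsplit : ∑ i, ∑ j, F i j = ∑ i, ∑ j, ((if i < j then F i j else 0) +
      (if j < i then F i j else 0) + if i = j then F i j else 0) := by
    refine sum_congr rfl fun i _ => sum_congr rfl fun j _ => ?_
    rcases lt_trichotomy i j with h | rfl | h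
    · simp [h, h.ne, h.not_gt]
    · simp
    · simp [h, h.ne', h.not_gt]
  simp only [sum_add_distrib, sum_ite_eq, mem_univ, if_true, hswap,
    ← sumPairs_eq_sum_sum_ite] at hsplit
  linarith

lemma sumPairs_add (g : ι → ℝ) :
    sumPairs (fun i j => g i + g j) = (Fintype.card ι - 1) * ∑ i, g i := by
  have h := two_mul_sumPairs (F := fun i j => g i + g j) fun i j => add_comm _ _
  simp only [sum_add_distrib, sum_const, card_univ, nsmul_eq_mul, ← mul_sum] at h
  linarith

lemma sumPairs_le_of_le {F : ι → ι → ℝ} {g : ι → ℝ} (h : ∀ i j, F i j ≤ g i + g j) :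
    sumPairs F ≤ (Fintype.card ι - 1) * ∑ i, g i :=
  (sum_le_sum fun p _ => h p.1 p.2).trans_eq (sumPairs_add g)

lemma sumPairs_abs_sub_le {y : ι → ℝ} (hy : ∑ i, y i = 0) :
    sumPairs (fun i j => |y i - y j|) ≤ (Fintype.card ι - 1) * (2 * ∑ i, (y i)⁺) := by
  have hD : ∑ i, (|y i| + y i) = ∑ i, 2 • (y i)⁺ :=
    sum_congr rfl fun i _ => abs_add_eq_two_nsmul_posPart _
  simp only [sum_add_distrib, hy, add_zero, nsmul_eq_mul, Nat.cast_ofNat, ← mul_sum] at hD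
  rw [← hD]
  exact sumPairs_le_of_le fun i j => abs_sub _ _

lemma sumPairs_sq_sub_le (y : ι → ℝ) :
    sumPairs (fun i j => (y i - y j) ^ 2) ≤ (Fintype.card ι - 1) * ∑ i, 2 * y i ^ 2 :=
  sumPairs_le_of_le fun i j => by nlinarith [sq_nonneg (y i + y j)]

end SumPairs

lemma exp_sub_one_sub_nonneg (t : ℝ) : 0 ≤ exp t - 1 - t := by
  linarith [add_one_le_exp t]

lemma sq_div_four_le_exp_sub_one_sub {t : ℝ} (ht : -2 ≤ t) : t ^ 2 / 4 ≤ exp t - 1 - t := by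
  have h := add_one_le_exp (t / 2)
  have hsq : exp (t / 2) ^ 2 = exp t := by rw [← exp_nat_mul]; ring_nf
  nlinarith [exp_pos (t / 2)]

lemma one_le_exp_sub_one_sub {t : ℝ} (ht : 2 ≤ |t|) : 1 ≤ exp t - 1 - t := by
  rcases le_abs'.mp ht with h | h
  · linarith [exp_pos t]
  · nlinarith [sq_div_four_le_exp_sub_one_sub (show -2 ≤ t by linarith)]

lemma exp_posPart_sub_one_sub_le (t : ℝ) : exp t⁺ - 1 - t⁺ ≤ exp t - 1 - t := by
  rcases le_total t 0 with h | h
  · simpa [posPart_eq_zero.2 h] using exp_sub_one_sub_nonneg t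
  · rw [posPart_eq_self.2 h]

lemma convexOn_exp_sub_one_sub : ConvexOn ℝ Set.univ (fun t => exp t - 1 - t) := by
  have h := convexOn_exp.sub ((concaveOn_id convex_univ).add_const 1)
  have e : (fun t => exp t - 1 - t) = exp - (id + fun _ => 1) := by
    ext t
    simp only [Pi.sub_apply, Pi.add_apply, id]
    ring
  rwa [e]

lemma half_le_log_exp_sub_self {p : ℝ} (hp : 2 ≤ p) : p / 2 ≤ log (exp p - p) := by
  have hx : p / 2 + 1 ≤ exp (p / 2) := add_one_le_exp _
  have hsq : exp (p / 2) ^ 2 = exp p := by rw [← exp_nat_mul]; ring_nf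
  rw [le_log_iff_exp_le (by nlinarith)]
  nlinarith

section LogMeanExp

variable {ι : Type*} [Fintype ι] [Nonempty ι]

lemma ConvexOn.card_mul_map_average_le {f : ℝ → ℝ} (hf : ConvexOn ℝ Set.univ f) (t : ι → ℝ) :
    Fintype.card ι * f ((∑ i, t i) / Fintype.card ι) ≤ ∑ i, f (t i) := by
  have hn : (0 : ℝ) < Fintype.card ι := by exact_mod_cast Fintype.card_pos
  have h := hf.map_sum_le (t := univ) (w := fun _ => (Fintype.card ι : ℝ)⁻¹) (p := t)
    (fun _ _ => by positivity) (by simp [hn.ne']) (fun _ _ => Set.mem_univ _)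
  simp only [smul_eq_mul, ← mul_sum] at h
  calc (Fintype.card ι : ℝ) * f ((∑ i, t i) / Fintype.card ι)
      ≤ Fintype.card ι * ((Fintype.card ι : ℝ)⁻¹ * ∑ i, f (t i)) := by
        rw [div_eq_inv_mul]; gcongr
    _ = ∑ i, f (t i) := by field_simp

lemma log_mean_exp_sub (x : ι → ℝ) (c : ℝ) :
    log ((∑ i, exp (x i)) / Fintype.card ι) - c =
      log ((∑ i, exp (x i - c)) / Fintype.card ι) := by
  have hn : (0 : ℝ) < Fintype.card ι := by exact_mod_cast Fintype.card_pos
  simp only [exp_sub, ← sum_div]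
  rw [div_right_comm, log_div (by positivity) (exp_pos c).ne', log_exp]

lemma mean_exp_eq_one_add {y : ι → ℝ} (hy : ∑ i, y i = 0) :
    (∑ i, exp (y i)) / Fintype.card ι =
      1 + (∑ i, (exp (y i) - 1 - y i)) / Fintype.card ι := by
  have hn : (0 : ℝ) < Fintype.card ι := by exact_mod_cast Fintype.card_pos
  simp only [sum_sub_distrib, hy, sum_const, card_univ, nsmul_eq_mul, mul_one]
  field_simp
  ring

lemma sum_sq_div_le_log_one_add {y : ι → ℝ} (hy : ∀ i, |y i| ≤ 2) :
    (∑ i, y i ^ 2) / (8 * Fintype.card ι) ≤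
      log (1 + (∑ i, (exp (y i) - 1 - y i)) / Fintype.card ι) := by
  have hn : (0 : ℝ) < Fintype.card ι := by exact_mod_cast Fintype.card_pos
  set V := ∑ i, y i ^ 2
  set w := V / 4 / Fintype.card ι
  have hV : V ≤ 4 * Fintype.card ι :=
    calc V ≤ ∑ _i : ι, (4 : ℝ) := sum_le_sum fun i _ => by nlinarith [abs_le.mp (hy i)]
      _ = 4 * Fintype.card ι := by simp [mul_comm]
  have hw0 : 0 ≤ w := by positivity
  have hw1 : w ≤ 1 := by rw [div_le_one hn]; linarith
  have hwG : w ≤ (∑ i, (exp (y i) - 1 - y i)) / Fintype.card ι := by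
    refine div_le_div_of_nonneg_right ?_ hn.le
    rw [sum_div]
    exact sum_le_sum fun i _ => sq_div_four_le_exp_sub_one_sub (abs_le.mp (hy i)).1
  calc V / (8 * Fintype.card ι) = w / 2 := by ring
    _ ≤ 2 * w / (w + 2) := by rw [le_div_iff₀ (by positivity)]; nlinarith
    _ ≤ log (1 + w) := le_log_one_add_of_nonneg hw0
    _ ≤ _ := by gcongr

lemma two_div_le_log_one_add {y : ι → ℝ} {k : ι} (hk : 2 ≤ |y k|) :
    2 / (2 * Fintype.card ι + 1) ≤
      log (1 + (∑ i, (exp (y i) - 1 - y i)) / Fintype.card ι) := by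
  have hn : (0 : ℝ) < Fintype.card ι := by exact_mod_cast Fintype.card_pos
  have hG : 1 ≤ ∑ i, (exp (y i) - 1 - y i) := (one_le_exp_sub_one_sub hk).trans
    (single_le_sum (fun i _ => exp_sub_one_sub_nonneg (y i)) (mem_univ k))
  calc (2 : ℝ) / (2 * Fintype.card ι + 1)
      = 2 * (1 / Fintype.card ι) / (1 / Fintype.card ι + 2) := by field_simp; ring
    _ ≤ log (1 + 1 / Fintype.card ι) := le_log_one_add_of_nonneg (by positivity)
    _ ≤ _ := by gcongr

lemma average_posPart_div_two_le_log_one_add {y : ι → ℝ}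
    (hp : 2 ≤ (∑ i, (y i)⁺) / Fintype.card ι) :
    (∑ i, (y i)⁺) / Fintype.card ι / 2 ≤
      log (1 + (∑ i, (exp (y i) - 1 - y i)) / Fintype.card ι) := by
  have hn : (0 : ℝ) < Fintype.card ι := by exact_mod_cast Fintype.card_pos
  set p := (∑ i, (y i)⁺) / Fintype.card ι
  have hJensen : Fintype.card ι * (exp p - 1 - p) ≤ ∑ i, (exp (y i)⁺ - 1 - (y i)⁺) :=
    convexOn_exp_sub_one_sub.card_mul_map_average_le _
  have hposPart : ∑ i, (exp (y i)⁺ - 1 - (y i)⁺) ≤ ∑ i, (exp (y i) - 1 - y i) :=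
    sum_le_sum fun i _ => exp_posPart_sub_one_sub_le (y i)
  calc p / 2 ≤ log (exp p - p) := half_le_log_exp_sub_self hp
    _ = log (1 + (exp p - 1 - p)) := by ring_nf
    _ ≤ _ := by
      gcongr
      · linarith [exp_sub_one_sub_nonneg p]
      · rw [le_div_iff₀ hn]; linarith

theorem min_sumPairs_div_le_log_mean_exp [LinearOrder ι] {y : ι → ℝ} (hy : ∑ i, y i = 0) :
    min (sumPairs fun i j => |y i - y j|) (sumPairs fun i j => (y i - y j) ^ 2) /
      (4 * Fintype.card ι ^ 3) ≤ log ((∑ i, exp (y i)) / Fintype.card ι) := by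
  have hn : (1 : ℝ) ≤ Fintype.card ι := by exact_mod_cast Fintype.card_pos
  rw [mean_exp_eq_one_add hy]
  set n : ℝ := ((Fintype.card ι : ℕ) : ℝ)
  set P := ∑ i, (y i)⁺
  by_cases hsmall : ∀ i, |y i| ≤ 2
  · calc _ ≤ ((n - 1) * ∑ i, 2 * y i ^ 2) / (4 * n ^ 3) := by
          gcongr; exact (min_le_right _ _).trans (sumPairs_sq_sub_le y)
      _ ≤ (∑ i, y i ^ 2) / (8 * n) := by
          rw [← mul_sum, div_le_div_iff₀ (by positivity) (by positivity)]
          have hV : 0 ≤ ∑ i, y i ^ 2 := sum_nonneg fun i _ => sq_nonneg _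
          nlinarith [mul_nonneg hV (sq_nonneg (n - 2)), mul_nonneg hV (by linarith : (0 : ℝ) ≤ n)]
      _ ≤ _ := sum_sq_div_le_log_one_add hsmall
  push Not at hsmall
  obtain ⟨k, hk⟩ := hsmall
  have hmin : min (sumPairs fun i j => |y i - y j|) (sumPairs fun i j => (y i - y j) ^ 2) /
      (4 * n ^ 3) ≤ (n - 1) / n ^ 2 * (P / n / 2) :=
    calc _ ≤ (n - 1) * (2 * P) / (4 * n ^ 3) := by
          gcongr; exact (min_le_left _ _).trans (sumPairs_abs_sub_le hy)
      _ = _ := by field_simp; ring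
  have hcoef : (n - 1) / n ^ 2 ≤ 1 := by
    rw [div_le_one (by positivity)]; nlinarith
  rcases le_total 2 (P / n) with hp | hp
  · calc _ ≤ (n - 1) / n ^ 2 * (P / n / 2) := hmin
      _ ≤ P / n / 2 := mul_le_of_le_one_left (by positivity) hcoef
      _ ≤ _ := average_posPart_div_two_le_log_one_add hp
  · calc _ ≤ (n - 1) / n ^ 2 * (P / n / 2) := hmin
      _ ≤ (n - 1) / n ^ 2 := mul_le_of_le_one_right (by positivity) (by linarith)
      _ ≤ 2 / (2 * n + 1) := by
          rw [div_le_div_iff₀ (by positivity) (by positivity)]; nlinarith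
      _ ≤ _ := two_div_le_log_one_add hk.le

end LogMeanExp

theorem logsumexp_minus_average_ge (n : ℕ) (hn : 1 ≤ n) (x : Fin n → ℝ) :
    Real.log ((1 / (n : ℝ)) * ∑ i, Real.exp (x i)) - (1 / (n : ℝ)) * ∑ i, x i ≥
      (1 / (4 * (n : ℝ) ^ 3)) *
        min (∑ p ∈ Finset.univ.filter (fun p : Fin n × Fin n => p.1 < p.2), |x p.1 - x p.2|)
          (∑ p ∈ Finset.univ.filter (fun p : Fin n × Fin n => p.1 < p.2), (x p.1 - x p.2) ^ 2) := by
  have : NeZero n := ⟨by omega⟩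
  set c := (1 / (n : ℝ)) * ∑ i, x i
  have hy : ∑ i, (x i - c) = 0 := by
    simp only [sum_sub_distrib, sum_const, card_univ, Fintype.card_fin, nsmul_eq_mul, c]
    field_simp
    ring
  have h := min_sumPairs_div_le_log_mean_exp hy
  simp only [sumPairs, sub_sub_sub_cancel_right, Fintype.card_fin] at h
  have hlog := log_mean_exp_sub x c
  rw [Fintype.card_fin] at hlog
  rw [one_div_mul_eq_div, hlog, ge_iff_le, one_div_mul_eq_div]
  exact h
end

section
/- Let (g(x))_{x∈ℤ^d} be a translation-invariant random field, D ⊂ ℤ^d a finite set, x_0 ∈ ℤ^d, and for i ≥ 0 set D_i := D + i·x_0 and X_i := max_{x∈D_i} g(x). Assume k ≥ 1 and that μ(s) := E[max_{|x|_1≤s, |y|_1≤s} |g(x) − g(y)|] is finite, where s is the ℓ¹ diameter of D plus 2k|x_0|_1 (and D contains 0). Then E[(X_0 − max{X_1, ..., X_{k+1}})⁺] ≤ 2μ(s)/k. -/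
/-!
Write `X i := max_{x ∈ D} g (x + i • x₀)` and `M i := max (X i, …, X (i + k))`. Then
`(X 0 - max (X 1, …, X (k + 1)))⁺ ≤ |M 0 - M 1|`, and by translation invariance
`E |M i - M (i + 1)|` does not depend on `i`, so `k E |M 0 - M 1| = E ∑_{i<k} |M i - M (i + 1)|`.
The windows of the `M i`, `i ≤ k`, all contain the index `k`; splitting them there writes `M i` as
the maximum of a nonincreasing and a nondecreasing sequence, so the total variation
`∑_{i<k} |M i - M (i + 1)|` is at most `(M 0 - X k) + (M k - X k)`. Both terms are bounded by
the oscillation of `g` on a finite set in the `ℓ¹`-ball of radius `s`, whose expectation is at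
most `μ`.
-/

open MeasureTheory ProbabilityTheory Finset
open scoped Pointwise

lemma integrable_finset_sup' {Ω ι β : Type*} [MeasurableSpace Ω] {μ : Measure Ω}
    [NormedAddCommGroup β] [Lattice β] [HasSolidNorm β] [IsOrderedAddMonoid β] {s : Finset ι}
    (hs : s.Nonempty) {f : ι → Ω → β}
    (hf : ∀ i ∈ s, Integrable (f i) μ) : Integrable (fun ω => s.sup' hs (f · ω)) μ := by
  have h : Integrable (s.sup' hs f) μ :=
    Finset.sup'_induction (p := (Integrable · μ)) hs f (fun _ hf _ hg => hf.sup hg) hf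
  convert h using 1
  ext ω
  rw [Finset.sup'_apply]

noncomputable def osc {ι : Type*} (F : Finset ι) (hF : F.Nonempty) (f : ι → ℝ) : ℝ :=
  (F ×ˢ F).sup' (hF.product hF) fun p => |f p.1 - f p.2|

lemma sub_le_osc {ι : Type*} {F : Finset ι} (hF : F.Nonempty) (f : ι → ℝ) {p q : ι}
    (hp : p ∈ F) (hq : q ∈ F) : f p - f q ≤ osc F hF f :=
  (le_abs_self _).trans <|
    le_sup' (fun r : ι × ι => |f r.1 - f r.2|) (b := (p, q)) (mem_product.2 ⟨hp, hq⟩)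

lemma sum_abs_add_nsmul_le {ι : Type*} [Fintype ι] (y v : ι → ℤ) (n : ℕ) :
    ∑ j, |(y + n • v) j| ≤ ∑ j, |y j| + n * ∑ j, |v j| := by
  rw [mul_sum, ← sum_add_distrib]
  gcongr with j
  simpa [abs_mul] using abs_add_le (y j) (n * v j)

lemma sum_abs_le_of_mem_add_image_nsmul {ι : Type*} [Fintype ι] [DecidableEq ι]
    {D : Finset (ι → ℤ)} (hD : D.Nonempty) (h0D : (0 : ι → ℤ) ∈ D) (v : ι → ℤ) {m : ℕ} {z : ι → ℤ}
    (hz : z ∈ D + (range (m + 1)).image (· • v)) :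
    ∑ j, |z j| ≤ (D ×ˢ D).sup' (hD.product hD) (fun p => ∑ j, |p.1 j - p.2 j|)
      + m * ∑ j, |v j| := by
  simp only [mem_add, mem_image, mem_range] at hz
  obtain ⟨y, hy, _, ⟨n, hn, rfl⟩, rfl⟩ := hz
  have hdiam : ∑ j, |y j| ≤ (D ×ˢ D).sup' (hD.product hD) fun p => ∑ j, |p.1 j - p.2 j| := by
    simpa only [Pi.zero_apply, sub_zero] using
      le_sup' (fun p : (ι → ℤ) × (ι → ℤ) => ∑ j, |p.1 j - p.2 j|) (b := (y, 0))
        (mem_product.2 ⟨hy, h0D⟩)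
  have hn : (n : ℤ) ≤ m := by omega
  nlinarith [sum_abs_add_nsmul_le y v n, sum_nonneg fun j (_ : j ∈ univ) => abs_nonneg (v j)]

section WindowMax

variable {α : Type*} [LinearOrder α]

def windowMax (x : ℕ → α) (k i : ℕ) : α :=
  (Icc i (i + k)).sup' (nonempty_Icc.2 (Nat.le_add_right i k)) x

variable (x : ℕ → α)

lemma le_windowMax (k i : ℕ) : x i ≤ windowMax x k i :=
  le_sup' x (by simp)

@[simp]
lemma windowMax_zero (i : ℕ) : windowMax x 0 i = x i := by
  simp [windowMax]

lemma windowMax_mono {k k' i i' : ℕ} (hi : i ≤ i') (hk : i' + k' ≤ i + k) :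
    windowMax x k' i' ≤ windowMax x k i :=
  sup'_mono x (Icc_subset_Icc hi hk) _

lemma windowMax_add (m n i : ℕ) :
    windowMax x (m + n) i = max (windowMax x m i) (windowMax x n (i + m)) := by
  have h : Icc i (i + (m + n)) = Icc i (i + m) ∪ Icc (i + m) (i + m + n) := by
    ext j; simp only [mem_Icc, mem_union]; omega
  rw [windowMax, sup'_congr _ h fun _ _ => rfl, sup'_union]
  rfl

lemma windowMax_comp_add (k n i : ℕ) :
    windowMax (fun j => x (n + j)) k i = windowMax x k (n + i) := by
  have h : Icc (n + i) (n + i + k) = (Icc i (i + k)).map (addLeftEmbedding n) := by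
    simp [add_assoc]
  rw [windowMax, windowMax, sup'_congr _ h fun _ _ => rfl, sup'_map]
  rfl

end WindowMax

lemma sum_abs_sub_le_of_eq_max {f a b : ℕ → ℝ} {k : ℕ} (ha : ∀ i < k, a (i + 1) ≤ a i)
    (hb : ∀ i < k, b i ≤ b (i + 1)) (hf : ∀ i ≤ k, f i = max (a i) (b i)) :
    ∑ i ∈ range k, |f i - f (i + 1)| ≤ (a 0 - a k) + (b k - b 0) := by
  calc ∑ i ∈ range k, |f i - f (i + 1)|
      ≤ ∑ i ∈ range k, ((a i - a (i + 1)) + (b (i + 1) - b i)) := by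
        refine sum_le_sum fun i hi => ?_
        have hi := mem_range.1 hi
        rw [hf i hi.le, hf (i + 1) hi]
        refine (abs_max_sub_max_le_max _ _ _ _).trans (max_le ?_ ?_)
        · rw [abs_of_nonneg (sub_nonneg.2 (ha i hi))]
          linarith [hb i hi]
        · rw [abs_sub_comm, abs_of_nonneg (sub_nonneg.2 (hb i hi))]
          linarith [ha i hi]
    _ = (a 0 - a k) + (b k - b 0) := by
        rw [sum_add_distrib, sum_range_sub', sum_range_sub]

lemma sum_abs_windowMax_sub_le (x : ℕ → ℝ) (k : ℕ) :
    ∑ i ∈ range k, |windowMax x k i - windowMax x k (i + 1)|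
      ≤ (windowMax x k 0 - x k) + (windowMax x k k - x k) := by
  have h := sum_abs_sub_le_of_eq_max (k := k) (f := windowMax x k)
    (a := fun i => windowMax x (k - i) i) (b := fun i => windowMax x i k)
    (fun i hi => windowMax_mono x (by omega) (by omega))
    (fun i hi => windowMax_mono x le_rfl (by omega))
    (fun i hi => by
      have h := windowMax_add x (k - i) i i
      rwa [Nat.sub_add_cancel hi, Nat.add_sub_cancel' hi] at h)
  simp only [Nat.sub_zero, Nat.sub_self, windowMax_zero] at h
  linarith

lemma max_sub_sup'_Icc_le (x : ℕ → ℝ) (k : ℕ) (h : (Icc 1 (k + 1)).Nonempty) :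
    max (x 0 - (Icc 1 (k + 1)).sup' h x) 0 ≤ |windowMax x k 0 - windowMax x k 1| := by
  have h₁ : windowMax x k 1 = (Icc 1 (k + 1)).sup' h x :=
    sup'_congr _ (by rw [add_comm]) fun _ _ => rfl
  rw [← h₁]
  exact max_le (by linarith [le_windowMax x k 0, le_abs_self (windowMax x k 0 - windowMax x k 1)])
    (abs_nonneg _)

lemma measurable_windowMax (k i : ℕ) : Measurable fun y : ℕ → ℝ => windowMax y k i := by
  have h := Finset.measurable_sup' (nonempty_Icc.2 (Nat.le_add_right i k))
    (f := fun j (y : ℕ → ℝ) => y j) fun j _ => measurable_pi_apply j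
  convert h using 1
  ext y
  rw [Finset.sup'_apply]
  rfl

section Stationary

variable {Ω : Type*} [MeasurableSpace Ω] {μ : Measure Ω} {Y : Ω → ℕ → ℝ}

lemma integrable_windowMax (hY : ∀ j, Integrable (fun ω => Y ω j) μ) (k i : ℕ) :
    Integrable (fun ω => windowMax (Y ω) k i) μ :=
  integrable_finset_sup' _ fun j _ => hY j

lemma integral_abs_windowMax_sub_eq (hY : ∀ n, IdentDistrib (fun ω j => Y ω (n + j)) Y μ μ)
    (k i : ℕ) :
    ∫ ω, |windowMax (Y ω) k i - windowMax (Y ω) k (i + 1)| ∂μ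
      = ∫ ω, |windowMax (Y ω) k 0 - windowMax (Y ω) k 1| ∂μ := by
  have hΦ : Measurable fun y : ℕ → ℝ => |windowMax y k 0 - windowMax y k 1| :=
    ((measurable_windowMax k 0).sub (measurable_windowMax k 1)).abs
  simpa only [Function.comp_def, windowMax_comp_add, add_zero] using
    ((hY i).comp hΦ).integral_eq

lemma mul_integral_abs_windowMax_sub_le (hY : ∀ n, IdentDistrib (fun ω j => Y ω (n + j)) Y μ μ)
    (hint : ∀ j, Integrable (fun ω => Y ω j) μ) {S : Ω → ℝ} (hS : Integrable S μ) (k : ℕ)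
    (hYS : ∀ ω, ∀ i ≤ k, windowMax (Y ω) k i - Y ω k ≤ S ω) :
    k * ∫ ω, |windowMax (Y ω) k 0 - windowMax (Y ω) k 1| ∂μ ≤ 2 * ∫ ω, S ω ∂μ := by
  have hW : ∀ i, Integrable (fun ω => |windowMax (Y ω) k i - windowMax (Y ω) k (i + 1)|) μ :=
    fun i => ((integrable_windowMax hint k i).sub (integrable_windowMax hint k (i + 1))).abs
  calc (k : ℝ) * ∫ ω, |windowMax (Y ω) k 0 - windowMax (Y ω) k 1| ∂μ
      = ∑ i ∈ range k, ∫ ω, |windowMax (Y ω) k i - windowMax (Y ω) k (i + 1)| ∂μ := by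
        simp [integral_abs_windowMax_sub_eq hY]
    _ = ∫ ω, ∑ i ∈ range k, |windowMax (Y ω) k i - windowMax (Y ω) k (i + 1)| ∂μ :=
        (integral_finsetSum _ fun i _ => hW i).symm
    _ ≤ ∫ ω, 2 * S ω ∂μ := by
        refine integral_mono (integrable_finsetSum _ fun i _ => hW i) (hS.const_mul 2)
          fun ω => (sum_abs_windowMax_sub_le _ k).trans ?_
        linarith [hYS ω 0 (Nat.zero_le k), hYS ω k le_rfl]
    _ = 2 * ∫ ω, S ω ∂μ := integral_const_mul 2 S

end Stationary

section RandomField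

variable {Ω G : Type*} [MeasurableSpace Ω] {μ : Measure Ω} [AddCommMonoid G]

lemma identDistrib_translate {g : Ω → G → ℝ} (hg : Measurable g) {v : G}
    (hv : Measure.map (fun ω x => g ω (x + v)) μ = Measure.map g μ) :
    IdentDistrib (fun ω x => g ω (x + v)) g μ μ where
  aemeasurable_fst :=
    (measurable_pi_lambda _ fun x => (measurable_pi_apply (x + v)).comp hg).aemeasurable
  aemeasurable_snd := hg.aemeasurable
  map_eq := hv

lemma identDistrib_sup'_translate {g : Ω → G → ℝ} (hg : Measurable g)
    (hinv : ∀ v, Measure.map (fun ω x => g ω (x + v)) μ = Measure.map g μ)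
    {D : Finset G} (hD : D.Nonempty) (x₀ : G) (n : ℕ) :
    IdentDistrib (fun ω j => D.sup' hD fun x => g ω (x + (n + j) • x₀))
      (fun ω j => D.sup' hD fun x => g ω (x + j • x₀)) μ μ := by
  have hΨ : Measurable fun (f : G → ℝ) (j : ℕ) => D.sup' hD fun x => f (x + j • x₀) :=
    measurable_pi_lambda _ fun j => by
      convert Finset.measurable_sup' hD (f := fun x (f : G → ℝ) => f (x + j • x₀))
        (fun x _ => measurable_pi_apply _) using 1
      ext f
      rw [Finset.sup'_apply]
  convert (identDistrib_translate hg (hinv (n • x₀))).comp hΨ using 1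
  · ext ω j
    simp only [Function.comp_apply, add_smul, add_assoc, add_comm (n • x₀)]
  · rfl

lemma windowMax_sup'_translate_sub_le_osc (f : G → ℝ) {D : Finset G} (hD : D.Nonempty) (x₀ : G)
    {F : Finset G} (hF : F.Nonempty) {k : ℕ} (hDF : ∀ j ≤ 2 * k, ∀ x ∈ D, x + j • x₀ ∈ F)
    {i : ℕ} (hi : i ≤ k) :
    windowMax (fun j => D.sup' hD fun x => f (x + j • x₀)) k i
      - D.sup' hD (fun x => f (x + k • x₀)) ≤ osc F hF f := by
  rw [sub_le_iff_le_add]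
  refine sup'_le _ _ fun j hj => sup'_le _ _ fun x hx => ?_
  have hj : j ≤ 2 * k := by simp only [mem_Icc] at hj; omega
  have h₁ : f (x + k • x₀) ≤ D.sup' hD fun x => f (x + k • x₀) :=
    le_sup' (fun x => f (x + k • x₀)) hx
  have h₂ := sub_le_osc hF f (hDF j hj x hx) (hDF k (by omega) x hx)
  linarith

end RandomField

theorem moving_maxima_bound {Ω : Type*} [MeasureSpace Ω]
    [IsProbabilityMeasure (volume : Measure Ω)]
    (d k : ℕ) (hk : 1 ≤ k)
    (g : Ω → (Fin d → ℤ) → ℝ) (hgmeas : Measurable g)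
    (hgint : ∀ x : Fin d → ℤ, Integrable (fun ω => g ω x))
    (hinv : ∀ v : Fin d → ℤ,
      Measure.map (fun ω => fun x => g ω (x + v)) volume = Measure.map g volume)
    (D : Finset (Fin d → ℤ)) (hD : D.Nonempty) (h0D : 0 ∈ D)
    (x₀ : Fin d → ℤ) (s : ℤ)
    (hs : s = (D ×ˢ D).sup' (hD.product hD) (fun p => ∑ j, |p.1 j - p.2 j|)
      + 2 * (k : ℤ) * ∑ j, |x₀ j|)
    (μ : ℝ)
    (hμ : ∀ (F : Finset (Fin d → ℤ)) (hF : F.Nonempty),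
      (∀ x ∈ F, ∑ j, |x j| ≤ s) →
      ∫ ω, (F ×ˢ F).sup' (hF.product hF) (fun p => |g ω p.1 - g ω p.2|) ≤ μ) :
    ∫ ω, max
        (D.sup' hD (fun x => g ω x)
          - (Finset.Icc 1 (k + 1)).sup' (Finset.nonempty_Icc.mpr (by omega))
              (fun i => D.sup' hD (fun x => g ω (x + i • x₀)))) 0
      ≤ 2 * μ / (k : ℝ) := by
  set Y : Ω → ℕ → ℝ := fun ω j => D.sup' hD fun x => g ω (x + j • x₀)
  set F := D + (range (2 * k + 1)).image (· • x₀)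
  have hDF : ∀ j ≤ 2 * k, ∀ x ∈ D, x + j • x₀ ∈ F := fun j hj x hx =>
    add_mem_add hx (mem_image_of_mem _ (mem_range.2 (Nat.lt_succ_of_le hj)))
  have hF : F.Nonempty := hD.add (nonempty_range_add_one.image _)
  have hFs : ∀ z ∈ F, ∑ j, |z j| ≤ s := fun z hz => by
    simpa [hs] using sum_abs_le_of_mem_add_image_nsmul hD h0D x₀ hz
  have hS : Integrable (fun ω => osc F hF (g ω)) :=
    integrable_finset_sup' _ fun p _ => ((hgint p.1).sub (hgint p.2)).abs
  have hSμ : ∫ ω, osc F hF (g ω) ≤ μ := hμ F hF hFs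
  have hint : ∀ j, Integrable fun ω => Y ω j := fun j =>
    integrable_finset_sup' hD fun x _ => hgint _
  have hmain := mul_integral_abs_windowMax_sub_le
    (identDistrib_sup'_translate hgmeas hinv hD x₀) hint hS k
    fun ω i hi => windowMax_sup'_translate_sub_le_osc (g ω) hD x₀ hF hDF hi
  calc _ ≤ ∫ ω, |windowMax (Y ω) k 0 - windowMax (Y ω) k 1| := by
        refine integral_mono_of_nonneg (ae_of_all _ fun ω => le_max_right _ _)
          ((integrable_windowMax hint k 0).sub (integrable_windowMax hint k 1)).abs
          (ae_of_all _ fun ω => ?_)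
        simpa [Y] using max_sub_sup'_Icc_le (Y ω) k (nonempty_Icc.2 (by omega))
    _ ≤ 2 * μ / k := by
        rw [le_div_iff₀ (by exact_mod_cast hk), mul_comm]
        linarith
end
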